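/- Let A be a commutative ring and G an infinite finitely generated group. Then the module of G-coinvariants of every injective AG-module is zero, i.e., I_G = A ⊗_{AG} I = 0 for every injective AG-module I. -/

import Mathlib

set_option linter.unusedVariables false

open CategoryTheory

universe u

namespace GP


variable (R : Type u) [Ring R]

/-- Flatness of a module over an arbitrary ring, via the equational criterion:
every linear relation among elements of `M` is trivial. -/
def IsFlatMod (M : ModuleCat.{u} R) : Prop :=
  ∀ (n : ℕ) (r : Fin n → R) (x : Fin n → M), (∑ i, r i • x i) = 0 →
    ∃ (m : ℕ) (a : Fin n → Fin m → R) (y : Fin m → M),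
      (∀ i, x i = ∑ j, a i j • y j) ∧ ∀ j, (∑ i, r i * a i j) = 0

/-- `ResDimLE R C n M` : there is an exact sequence
`0 → G_n → ⋯ → G_0 → M → 0` with each `G_i` in the class `C`. -/
def ResDimLE (C : ModuleCat.{u} R → Prop) : ℕ → ModuleCat.{u} R → Prop
  | 0, M => C M
  | n+1, M => ∃ (K G : ModuleCat.{u} R) (ι : K ⟶ G) (π : G ⟶ M),
      C G ∧ Function.Injective ι ∧ Function.Surjective π ∧
      Function.Exact ι π ∧ ResDimLE C n K

/-- `CoresDimLE R C n M` : there is an exact sequence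
`0 → M → G_0 → ⋯ → G_n → 0` with each `G_i` in the class `C`. -/
def CoresDimLE (C : ModuleCat.{u} R → Prop) : ℕ → ModuleCat.{u} R → Prop
  | 0, M => C M
  | n+1, M => ∃ (G K : ModuleCat.{u} R) (ι : M ⟶ G) (π : G ⟶ K),
      C G ∧ Function.Injective ι ∧ Function.Surjective π ∧
      Function.Exact ι π ∧ CoresDimLE C n K

/-- The resolution dimension of `M` with respect to the class `C`, in `ℕ∞`. -/
noncomputable def resDim (C : ModuleCat.{u} R → Prop) (M : ModuleCat.{u} R) : ℕ∞ :=
  sInf {n : ℕ∞ | ∃ k : ℕ, n = (k : ℕ∞) ∧ ResDimLE R C k M}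

/-- The coresolution dimension of `M` with respect to the class `C`, in `ℕ∞`. -/
noncomputable def coresDim (C : ModuleCat.{u} R → Prop) (M : ModuleCat.{u} R) : ℕ∞ :=
  sInf {n : ℕ∞ | ∃ k : ℕ, n = (k : ℕ∞) ∧ CoresDimLE R C k M}

/-- Projective dimension. -/
noncomputable def projDim (M : ModuleCat.{u} R) : ℕ∞ :=
  resDim R (fun N => Module.Projective R N) M

/-- Flat dimension. -/
noncomputable def flatDim (M : ModuleCat.{u} R) : ℕ∞ :=
  resDim R (IsFlatMod R) M

/-- Injective dimension. -/
noncomputable def injDim (M : ModuleCat.{u} R) : ℕ∞ :=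
  coresDim R (fun N => Module.Injective R N) M

/-- `spli R` : supremum of the projective dimensions of injective modules. -/
noncomputable def spli : ℕ∞ :=
  ⨆ (I : ModuleCat.{u} R) (_ : Module.Injective R I), projDim R I

/-- `silp R` : supremum of the injective dimensions of projective modules. -/
noncomputable def silp : ℕ∞ :=
  ⨆ (P : ModuleCat.{u} R) (_ : Module.Projective R P), injDim R P

/-- `sfli R` : supremum of the flat dimensions of injective modules. -/
noncomputable def sfli : ℕ∞ :=
  ⨆ (I : ModuleCat.{u} R) (_ : Module.Injective R I), flatDim R I

/-- `silf R` : supremum of the injective dimensions of flat modules. -/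
noncomputable def silf : ℕ∞ :=
  ⨆ (F : ModuleCat.{u} R) (_ : IsFlatMod R F), injDim R F

/-- Finitistic injective dimension. -/
noncomputable def fidim : ℕ∞ :=
  ⨆ (M : ModuleCat.{u} R) (_ : injDim R M ≠ ⊤), injDim R M

/-- Finitistic projective dimension. -/
noncomputable def findim : ℕ∞ :=
  ⨆ (M : ModuleCat.{u} R) (_ : projDim R M ≠ ⊤), projDim R M

/-- Finitistic flat dimension. -/
noncomputable def ffdim : ℕ∞ :=
  ⨆ (M : ModuleCat.{u} R) (_ : flatDim R M ≠ ⊤), flatDim R M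

/-- `M` is Gorenstein projective: it arises as a kernel in a totally acyclic
complex of projectives. -/
def IsGProj (M : ModuleCat.{u} R) : Prop :=
  ∃ (P : ℤ → ModuleCat.{u} R) (d : ∀ i : ℤ, P i ⟶ P (i + 1)),
    (∀ i, Module.Projective R (P i)) ∧
    (∀ i, Function.Exact (d i) (d (i + 1))) ∧
    (∀ (Q : ModuleCat.{u} R), Module.Projective R Q →
      ∀ (i : ℤ) (f : P (i + 1) ⟶ Q), d i ≫ f = 0 →
        ∃ g : P (i + 1 + 1) ⟶ Q, d (i + 1) ≫ g = f) ∧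
    (∃ (i : ℤ) (e : M ⟶ P i), Function.Injective e ∧ Function.Exact e (d i))

/-- `M` is Gorenstein injective: it arises as a kernel in a totally acyclic
complex of injectives. -/
def IsGInj (M : ModuleCat.{u} R) : Prop :=
  ∃ (I : ℤ → ModuleCat.{u} R) (d : ∀ i : ℤ, I i ⟶ I (i + 1)),
    (∀ i, Module.Injective R (I i)) ∧
    (∀ i, Function.Exact (d i) (d (i + 1))) ∧
    (∀ (J : ModuleCat.{u} R), Module.Injective R J →
      ∀ (i : ℤ) (f : J ⟶ I (i + 1)), f ≫ d (i + 1) = 0 →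
        ∃ g : J ⟶ I i, g ≫ d i = f) ∧
    (∃ (i : ℤ) (e : M ⟶ I i), Function.Injective e ∧ Function.Exact e (d i))

section BTensor

variable {R}

/-- The defining relations of the balanced tensor product `N ⊗_R M` of a right
`R`-module `N` and a left `R`-module `M`, inside `N ⊗_ℤ M`. -/
def brel (N : ModuleCat.{u} Rᵐᵒᵖ) (M : ModuleCat.{u} R) :
    Submodule ℤ (TensorProduct ℤ N M) :=
  Submodule.span ℤ
    {z | ∃ (s : R) (n : N) (m : M),
      z = (MulOpposite.op s • n) ⊗ₜ[ℤ] m - n ⊗ₜ[ℤ] (s • m)}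

/-- The balanced tensor product `N ⊗_R M` of a right `R`-module and a left
`R`-module, as an abelian group (`ℤ`-module). -/
def BTensor (N : ModuleCat.{u} Rᵐᵒᵖ) (M : ModuleCat.{u} R) : Type u :=
  TensorProduct ℤ N M ⧸ brel N M

noncomputable instance (N : ModuleCat.{u} Rᵐᵒᵖ) (M : ModuleCat.{u} R) :
    AddCommGroup (BTensor N M) :=
  inferInstanceAs (AddCommGroup (TensorProduct ℤ N M ⧸ brel N M))

noncomputable instance (N : ModuleCat.{u} Rᵐᵒᵖ) (M : ModuleCat.{u} R) :
    Module ℤ (BTensor N M) :=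
  inferInstanceAs (Module ℤ (TensorProduct ℤ N M ⧸ brel N M))

/-- The map `N ⊗_R M → N ⊗_R M'` induced by an `R`-linear map `M → M'`. -/
noncomputable def bmap (N : ModuleCat.{u} Rᵐᵒᵖ) {M M' : ModuleCat.{u} R}
    (f : M ⟶ M') : BTensor N M →ₗ[ℤ] BTensor N M' :=
  Submodule.mapQ (brel N M) (brel N M')
    (LinearMap.lTensor N ((f.hom : M →ₗ[R] M').toAddMonoidHom.toIntLinearMap))
    (by
      rw [brel, Submodule.span_le]
      rintro z ⟨s, n, m, rfl⟩
      simp only [SetLike.mem_coe, Submodule.mem_comap, map_sub,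
        LinearMap.lTensor_tmul]
      have h1 : ((f.hom : M →ₗ[R] M').toAddMonoidHom.toIntLinearMap) (s • m)
          = s • ((f.hom : M →ₗ[R] M').toAddMonoidHom.toIntLinearMap) m :=
        (f.hom : M →ₗ[R] M').map_smul s m
      change (LinearMap.lTensor N ((f.hom : M →ₗ[R] M').toAddMonoidHom.toIntLinearMap))
        ((MulOpposite.op s • n) ⊗ₜ[ℤ] m - n ⊗ₜ[ℤ] (s • m)) ∈ brel N M'
      rw [map_sub, LinearMap.lTensor_tmul, LinearMap.lTensor_tmul, h1]
      exact Submodule.subset_span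
        ⟨s, n, ((f.hom : M →ₗ[R] M').toAddMonoidHom.toIntLinearMap) m, rfl⟩)

end BTensor

/-- `M` is Gorenstein flat: it arises as a kernel in an acyclic complex of flat
modules which stays acyclic after tensoring with any injective right module. -/
def IsGFlat (M : ModuleCat.{u} R) : Prop :=
  ∃ (F : ℤ → ModuleCat.{u} R) (d : ∀ i : ℤ, F i ⟶ F (i + 1)),
    (∀ i, IsFlatMod R (F i)) ∧
    (∀ i, Function.Exact (d i) (d (i + 1))) ∧
    (∀ (I : ModuleCat.{u} Rᵐᵒᵖ), Module.Injective Rᵐᵒᵖ I →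
      ∀ i : ℤ, Function.Exact (bmap I (d i)) (bmap I (d (i + 1)))) ∧
    (∃ (i : ℤ) (e : M ⟶ F i), Function.Injective e ∧ Function.Exact e (d i))


variable (R : Type u) [Ring R] in
/-- Gorenstein projective dimension. -/
noncomputable def gprojDim (M : ModuleCat.{u} R) : ℕ∞ := resDim R (IsGProj R) M

variable (R : Type u) [Ring R] in
/-- Gorenstein injective dimension. -/
noncomputable def ginjDim (M : ModuleCat.{u} R) : ℕ∞ := coresDim R (IsGInj R) M

variable (R : Type u) [Ring R] in
/-- Gorenstein flat dimension. -/
noncomputable def gflatDim (M : ModuleCat.{u} R) : ℕ∞ := resDim R (IsGFlat R) M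


section GroupAlgebra

variable (A : Type u) [CommRing A] (G : Type u) [Group G]

/-- The augmentation map of a group algebra. -/
noncomputable def aug : MonoidAlgebra A G →+* A :=
  ((MonoidAlgebra.lift A A G) 1).toRingHom

/-- `A` as the trivial left module over the group algebra `A[G]`. -/
noncomputable def trivMod : ModuleCat.{u} (MonoidAlgebra A G) :=
  (ModuleCat.restrictScalars (aug A G)).obj (ModuleCat.of A A)

/-- The augmentation map, seen on the opposite group algebra. -/
noncomputable def augOp : (MonoidAlgebra A G)ᵐᵒᵖ →+* A :=
  (aug A G).fromOpposite (fun a b => mul_comm _ _)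

/-- `A` as the trivial right module over the group algebra `A[G]`. -/
noncomputable def trivModOp : ModuleCat.{u} (MonoidAlgebra A G)ᵐᵒᵖ :=
  (ModuleCat.restrictScalars (augOp A G)).obj (ModuleCat.of A A)

/-- Restriction of an `A[G]`-module to the base ring `A`. -/
noncomputable def resA (M : ModuleCat.{u} (MonoidAlgebra A G)) : ModuleCat.{u} A :=
  (ModuleCat.restrictScalars (algebraMap A (MonoidAlgebra A G))).obj M

/-- The ring homomorphism `A[H] → A[G]` attached to a subgroup `H ≤ G`. -/
noncomputable def subRingHom (H : Subgroup G) :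
    MonoidAlgebra A (↥H) →+* MonoidAlgebra A G :=
  MonoidAlgebra.mapDomainRingHom A H.subtype

/-- Restriction of an `A[G]`-module to `A[H]` for a subgroup `H ≤ G`. -/
noncomputable def resSub (H : Subgroup G) (M : ModuleCat.{u} (MonoidAlgebra A G)) :
    ModuleCat.{u} (MonoidAlgebra A (↥H)) :=
  (ModuleCat.restrictScalars (subRingHom A G H)).obj M

/-- The submodule of an `A[G]`-module generated by the elements `g • m - m`. -/
noncomputable def coinvRel (M : ModuleCat.{u} (MonoidAlgebra A G)) :
    Submodule (MonoidAlgebra A G) M :=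
  Submodule.span (MonoidAlgebra A G)
    {x | ∃ (g : G) (m : M), x = (MonoidAlgebra.of A G g) • m - m}

/-- The module of `G`-coinvariants of an `A[G]`-module. -/
noncomputable def Coinv (M : ModuleCat.{u} (MonoidAlgebra A G)) : Type u :=
  M ⧸ coinvRel A G M

noncomputable instance (M : ModuleCat.{u} (MonoidAlgebra A G)) :
    AddCommGroup (Coinv A G M) :=
  inferInstanceAs (AddCommGroup (M ⧸ coinvRel A G M))

/-- A group is locally finite if every finitely generated subgroup is finite. -/
def LocallyFinite (G : Type u) [Group G] : Prop :=
  ∀ H : Subgroup G, H.FG → Finite H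

end GroupAlgebra

/-- A ring is `ℵ₀`-Noetherian if every (left) ideal is countably generated. -/
def Aleph0Noetherian (S : Type u) [Ring S] : Prop :=
  ∀ I : Ideal S, ∃ s : Set S, s.Countable ∧ Ideal.span s = I

/-- A projective resolution of a module, as explicit data. -/
structure ProjRes (S : Type u) [Ring S] (M : ModuleCat.{u} S) where
  P : ℕ → ModuleCat.{u} S
  d : ∀ n : ℕ, P (n + 1) ⟶ P n
  ε : P 0 ⟶ M
  proj : ∀ n, Module.Projective S (P n)
  epi : Function.Surjective ε
  exact0 : Function.Exact (d 0) ε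
  exact : ∀ n, Function.Exact (d (n + 1)) (d n)

/-- The permutation module `A[K/L]` over the group algebra `A[K]`. -/
noncomputable def permMod (A : Type u) [CommRing A] (K : Type u) [Group K]
    (L : Subgroup K) : ModuleCat.{u} (MonoidAlgebra A K) :=
  ModuleCat.of _ (Representation.ofMulAction A K (K ⧸ L)).asModule


namespace GPAux
open scoped Classical

section Walk
variable {G : Type*} [Group G]

def Wn (S : Finset G) : ℕ → Set G
  | 0 => {1}
  | (n+1) => {x | ∃ y ∈ Wn S n, ∃ s ∈ S, x = y * s}

lemma one_mem_Wn (S : Finset G) : (1:G) ∈ Wn S 0 := rfl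

lemma mul_mem_Wn {S : Finset G} : ∀ {n : ℕ} {y x : G} {m : ℕ},
    x ∈ Wn S m → y ∈ Wn S n → x * y ∈ Wn S (m + n)
  | 0, y, x, m, hx, hy => by
      have : y = 1 := hy
      simpa [this] using hx
  | (n+1), y, x, m, hx, hy => by
      obtain ⟨y', hy', s, hs, rfl⟩ := hy
      have := mul_mem_Wn (n := n) hx hy'
      exact ⟨x * y', this, s, hs, (mul_assoc _ _ _).symm⟩

lemma inv_mem_Wn {S : Finset G} (hsymm : ∀ s ∈ S, s⁻¹ ∈ S) :
    ∀ {n : ℕ} {x : G}, x ∈ Wn S n → x⁻¹ ∈ Wn S n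
  | 0, x, hx => by
      have : x = 1 := hx
      simp [this, one_mem_Wn]
  | (n+1), x, hx => by
      obtain ⟨y, hy, s, hs, rfl⟩ := hx
      have h1 : s⁻¹ ∈ Wn S 1 := ⟨1, one_mem_Wn S, s⁻¹, hsymm s hs, (one_mul _).symm⟩
      have h2 : y⁻¹ ∈ Wn S n := inv_mem_Wn hsymm hy
      have := mul_mem_Wn (m := 1) h1 h2
      simpa [mul_inv_rev, Nat.add_comm] using this

variable (S : Finset G) (hgen : ∀ x : G, ∃ n, x ∈ Wn S n)

noncomputable def len (x : G) : ℕ := Nat.find (hgen x)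

lemma len_spec (x : G) : x ∈ Wn S (len S hgen x) := Nat.find_spec (hgen x)

lemma len_le {x : G} {n : ℕ} (h : x ∈ Wn S n) : len S hgen x ≤ n := Nat.find_min' _ h

lemma len_one : len S hgen 1 = 0 := Nat.le_zero.mp (len_le S hgen (one_mem_Wn S))

lemma eq_one_of_len_eq_zero {x : G} (h : len S hgen x = 0) : x = 1 := by
  have := len_spec S hgen x
  rw [h] at this
  exact this

lemma exists_parent {x : G} (hx : x ≠ 1) :
    ∃ s, s ∈ S ∧ len S hgen (x * s⁻¹) + 1 = len S hgen x := by
  have h0 : len S hgen x ≠ 0 := fun h => hx (eq_one_of_len_eq_zero S hgen h)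
  obtain ⟨k, hk⟩ : ∃ k, len S hgen x = k + 1 :=
    ⟨len S hgen x - 1, (Nat.succ_pred_eq_of_ne_zero h0).symm⟩
  have hs := len_spec S hgen x
  rw [hk] at hs
  obtain ⟨y, hy, s, hs', rfl⟩ := hs
  have hy1 : len S hgen y ≤ k := len_le S hgen hy
  have hy2 : y * s ∈ Wn S (len S hgen y + 1) :=
    ⟨y, len_spec S hgen y, s, hs', rfl⟩
  have hy3 : len S hgen (y * s) ≤ len S hgen y + 1 := len_le S hgen hy2
  have : len S hgen y = k := by omega
  refine ⟨s, hs', ?_⟩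
  rw [mul_inv_cancel_right, this, hk]

noncomputable def sel (x : G) : G :=
  if hx : x = 1 then 1 else (exists_parent S hgen hx).choose

noncomputable def par (x : G) : G := x * (sel S hgen x)⁻¹

lemma par_one : par S hgen 1 = 1 := by simp [par, sel]

lemma sel_mem {x : G} (hx : x ≠ 1) : sel S hgen x ∈ S := by
  rw [sel, dif_neg hx]
  exact (exists_parent S hgen hx).choose_spec.1

lemma len_par {x : G} (hx : x ≠ 1) : len S hgen (par S hgen x) + 1 = len S hgen x := by
  rw [par, sel, dif_neg hx]
  exact (exists_parent S hgen hx).choose_spec.2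

lemma par_mul_sel (x : G) : par S hgen x * sel S hgen x = x := inv_mul_cancel_right x _

lemma len_par_lt {x : G} (hx : x ≠ 1) : len S hgen (par S hgen x) < len S hgen x := by
  have := len_par S hgen hx; omega

lemma len_par_le (x : G) : len S hgen (par S hgen x) ≤ len S hgen x := by
  by_cases hx : x = 1
  · simp [hx, par_one]
  · exact le_of_lt (len_par_lt S hgen hx)

def Desc (x : G) : Set G := {z | ∃ n, (par S hgen)^[n] z = x}

lemma mem_Desc_self (x : G) : x ∈ Desc S hgen x := ⟨0, rfl⟩

lemma Desc_trans {z c y : G} (h1 : z ∈ Desc S hgen c) (h2 : c ∈ Desc S hgen y) :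
    z ∈ Desc S hgen y := by
  obtain ⟨m, rfl⟩ := h1
  obtain ⟨n, hn⟩ := h2
  exact ⟨n + m, by rw [Function.iterate_add_apply]; exact hn⟩

lemma Desc_one : Desc S hgen 1 = Set.univ := by
  refine Set.eq_univ_of_forall fun z => ?_
  suffices h : ∀ (n : ℕ) (z : G), len S hgen z ≤ n → z ∈ Desc S hgen 1 from
    h (len S hgen z) z le_rfl
  intro n
  induction n with
  | zero => intro z hz; rw [eq_one_of_len_eq_zero S hgen (Nat.le_zero.mp hz)];
            exact mem_Desc_self S hgen 1
  | succ n ih =>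
      intro z hz
      by_cases h1 : z = 1
      · rw [h1]; exact mem_Desc_self S hgen 1
      · have := len_par S hgen h1
        obtain ⟨m, hm⟩ := ih (par S hgen z) (by omega)
        exact ⟨m + 1, by rwa [Function.iterate_succ_apply]⟩

lemma len_le_of_mem_Desc {y z : G} (h : z ∈ Desc S hgen y) : len S hgen y ≤ len S hgen z := by
  obtain ⟨n, rfl⟩ := h
  induction n with
  | zero => exact le_rfl
  | succ n ih =>
      rw [Function.iterate_succ_apply']
      exact le_trans (len_par_le S hgen _) ih

lemma len_add_le_of_iter {j : ℕ} {x : G} (h : (par S hgen)^[j] x ≠ 1) :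
    len S hgen ((par S hgen)^[j] x) + j ≤ len S hgen x := by
  induction j with
  | zero => simp
  | succ j ih =>
      rw [Function.iterate_succ_apply'] at h ⊢
      have hj : (par S hgen)^[j] x ≠ 1 := by
        intro he; rw [he, par_one] at h; exact h rfl
      have := len_par S hgen hj
      have := ih hj
      omega


noncomputable def children (y : G) : Finset G :=
  (S.image (fun s => y * s)).filter (fun c => c ≠ 1 ∧ par S hgen c = y)

lemma mem_children {y c : G} : c ∈ children S hgen y ↔ c ≠ 1 ∧ par S hgen c = y := by
  classical
  constructor
  · intro h
    rw [children] at h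
    exact (Finset.mem_filter.mp h).2
  · intro h
    rw [children]
    refine Finset.mem_filter.mpr ⟨Finset.mem_image.mpr ⟨sel S hgen c, sel_mem S hgen h.1, ?_⟩, h⟩
    rw [← h.2]; exact par_mul_sel S hgen c

lemma len_children {y c : G} (h : c ∈ children S hgen y) :
    len S hgen c = len S hgen y + 1 := by
  obtain ⟨h1, h2⟩ := mem_children S hgen |>.mp h
  have := len_par S hgen h1
  rw [h2] at this
  omega

lemma Desc_subset_of_children {y c : G} (h : c ∈ children S hgen y) :
    Desc S hgen c ⊆ Desc S hgen y := fun _ hz =>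
  Desc_trans S hgen hz ⟨1, (mem_children S hgen |>.mp h).2⟩

lemma Desc_decomp (y : G) :
    Desc S hgen y = {y} ∪ ⋃ c ∈ (children S hgen y : Set G), Desc S hgen c := by
  apply Set.Subset.antisymm
  · intro z hz
    obtain ⟨n, hn⟩ := hz
    induction n generalizing z with
    | zero => exact Or.inl hn
    | succ n ih =>
        rw [Function.iterate_succ_apply'] at hn
        set c := (par S hgen)^[n] z with hc
        by_cases h1 : c = 1
        · have hy : y = 1 := by rw [h1, par_one] at hn; exact hn.symm
          exact ih (by rw [← hc, h1, hy])
        · refine Or.inr (Set.mem_biUnion ?_ ⟨n, rfl⟩)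
          exact Finset.mem_coe.mpr ((mem_children S hgen).mpr ⟨h1, hn⟩)
  · rintro z (hz | hz)
    · rw [hz]; exact mem_Desc_self S hgen y
    · simp only [Set.mem_iUnion, exists_prop] at hz
      obtain ⟨c, hc, hzc⟩ := hz
      exact Desc_subset_of_children S hgen hc hzc

lemma children_eq_of_mem_Desc {y c₁ c₂ z : G}
    (h1 : c₁ ∈ children S hgen y) (h2 : c₂ ∈ children S hgen y)
    (hz1 : z ∈ Desc S hgen c₁) (hz2 : z ∈ Desc S hgen c₂) : c₁ = c₂ := by
  have key : ∀ c c' : G, c ∈ children S hgen y → c' ∈ children S hgen y →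
      (∀ m k : ℕ, m ≤ k → (par S hgen)^[m] z = c → (par S hgen)^[k] z = c' → c = c') := by
    intro c c' hc hc' m k hmk hm hk
    have : (par S hgen)^[k - m] c = c' := by
      rw [← hm, ← Function.iterate_add_apply]
      rw [Nat.sub_add_cancel hmk]
      exact hk
    rcases Nat.eq_or_lt_of_le (Nat.zero_le (k - m)) with h0 | h0
    · rw [← h0] at this; simpa using this
    · exfalso
      have hc'1 : c' ≠ 1 := ((mem_children S hgen).mp hc').1
      have hle := len_add_le_of_iter S hgen (j := k - m) (x := c) (by rw [this]; exact hc'1)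
      rw [this] at hle
      have e1 := len_children S hgen hc
      have e2 := len_children S hgen hc'
      omega
  obtain ⟨m, hm⟩ := hz1
  obtain ⟨k, hk⟩ := hz2
  rcases le_total m k with h | h
  · exact key c₁ c₂ h1 h2 m k h hm hk
  · exact (key c₂ c₁ h2 h1 k m h hk hm).symm

lemma not_mem_Desc_children {y c : G} (hc : c ∈ children S hgen y) :
    y ∉ Desc S hgen c := by
  intro h
  have := len_le_of_mem_Desc S hgen h
  have := len_children S hgen hc
  omega

lemma exists_infinite_child {y : G} (hy : (Desc S hgen y).Infinite) :
    ∃ c ∈ children S hgen y, (Desc S hgen c).Infinite := by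
  by_contra h
  push_neg at h
  apply hy
  rw [Desc_decomp S hgen y]
  refine Set.Finite.union (Set.finite_singleton y) ?_
  refine Set.Finite.biUnion (Finset.finite_toSet _) ?_
  intro c hc
  rcases h c (Finset.mem_coe.mp hc) with hf
  exact hf

noncomputable def cstar (y : G) : G :=
  if h : ∃ c, c ∈ children S hgen y ∧ (Desc S hgen c).Infinite then h.choose else 1

lemma cstar_spec {y : G} (hy : (Desc S hgen y).Infinite) :
    cstar S hgen y ∈ children S hgen y ∧ (Desc S hgen (cstar S hgen y)).Infinite := by
  obtain ⟨c, hc, hcinf⟩ := exists_infinite_child S hgen hy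
  rw [cstar, dif_pos ⟨c, hc, hcinf⟩]
  exact (Exists.choose_spec (⟨c, hc, hcinf⟩ : ∃ c, c ∈ children S hgen y ∧ (Desc S hgen c).Infinite))

variable {V : Type*} [AddCommGroup V]

noncomputable def Phi (f : G → V) (y : G) : V := ∑ᶠ z ∈ Desc S hgen y, f z

lemma Phi_decomp {f : G → V} {y : G} (hy : (Desc S hgen y).Finite) :
    Phi S hgen f y = f y + ∑ c ∈ children S hgen y, Phi S hgen f c := by
  have hdec := Desc_decomp S hgen y
  have hfin : ∀ c ∈ children S hgen y, (Desc S hgen c).Finite := fun c hc =>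
    Set.Finite.subset hy (Desc_subset_of_children S hgen hc)
  have hU : (⋃ c ∈ (children S hgen y : Set G), Desc S hgen c).Finite :=
    Set.Finite.biUnion (Finset.finite_toSet _) (fun c hc => hfin c (Finset.mem_coe.mp hc))
  have hdisj : Disjoint ({y} : Set G) (⋃ c ∈ (children S hgen y : Set G), Desc S hgen c) := by
    rw [Set.disjoint_left]
    rintro z rfl hz
    simp only [Set.mem_iUnion, exists_prop] at hz
    obtain ⟨c, hc, hzc⟩ := hz
    exact not_mem_Desc_children S hgen (Finset.mem_coe.mp hc) hzc
  rw [Phi, hdec, finsum_mem_union hdisj (Set.finite_singleton y) hU, finsum_mem_singleton]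
  congr 1
  rw [finsum_mem_biUnion ?pd (Finset.finite_toSet _) (fun c hc => hfin c (Finset.mem_coe.mp hc)),
    finsum_mem_coe_finset]
  · rfl
  case pd =>
    intro c₁ h₁ c₂ h₂ hne
    rw [Function.onFun, Set.disjoint_left]
    intro z hz1 hz2
    exact hne (children_eq_of_mem_Desc S hgen (Finset.mem_coe.mp h₁) (Finset.mem_coe.mp h₂) hz1 hz2)

noncomputable def phi (f : G → V) (x : G) : V :=
  if (Desc S hgen x).Finite then Phi S hgen f x
  else if hx : x = 1 then 0
  else if x = cstar S hgen (par S hgen x) then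
    phi f (par S hgen x) - f (par S hgen x)
      - ∑ c ∈ (children S hgen (par S hgen x)).filter (fun c => (Desc S hgen c).Finite),
          Phi S hgen f c
  else 0
termination_by len S hgen x
decreasing_by exact len_par_lt S hgen hx

lemma phi_eq (f : G → V) (x : G) : phi S hgen f x =
    if (Desc S hgen x).Finite then Phi S hgen f x
    else if x = 1 then 0
    else if x = cstar S hgen (par S hgen x) then
      phi S hgen f (par S hgen x) - f (par S hgen x)
        - ∑ c ∈ (children S hgen (par S hgen x)).filter (fun c => (Desc S hgen c).Finite),
            Phi S hgen f c
    else 0 := by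
  rw [phi]
  simp only [dite_eq_ite]

lemma Desc_one_infinite [Infinite G] : (Desc S hgen (1 : G)).Infinite := by
  rw [Desc_one]; exact Set.infinite_univ

lemma phi_one [Infinite G] (f : G → V) : phi S hgen f 1 = 0 := by
  rw [phi_eq, if_neg (by simpa using Desc_one_infinite S hgen), if_pos rfl]

lemma conservation [Infinite G] (f : G → V) (y : G) :
    phi S hgen f y = f y + ∑ c ∈ children S hgen y, phi S hgen f c := by
  by_cases hy : (Desc S hgen y).Finite
  · have h1 : phi S hgen f y = Phi S hgen f y := by rw [phi_eq, if_pos hy]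
    have h2 : ∀ c ∈ children S hgen y, phi S hgen f c = Phi S hgen f c := by
      intro c hc
      rw [phi_eq, if_pos (Set.Finite.subset hy (Desc_subset_of_children S hgen hc))]
    rw [h1, Phi_decomp S hgen hy, Finset.sum_congr rfl h2]
  · classical
    have hyinf : (Desc S hgen y).Infinite := hy
    obtain ⟨hcs_mem, hcs_inf⟩ := cstar_spec S hgen hyinf
    set c₀ := cstar S hgen y with hc₀
    have hpar : par S hgen c₀ = y := ((mem_children S hgen).mp hcs_mem).2
    have hc₀ne : c₀ ≠ 1 := ((mem_children S hgen).mp hcs_mem).1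
    have hsplit := Finset.sum_filter_add_sum_filter_not (children S hgen y)
      (fun c => (Desc S hgen c).Finite) (fun c => phi S hgen f c)
    have hfinpart : ∑ c ∈ (children S hgen y).filter (fun c => (Desc S hgen c).Finite),
        phi S hgen f c
        = ∑ c ∈ (children S hgen y).filter (fun c => (Desc S hgen c).Finite),
            Phi S hgen f c := by
      refine Finset.sum_congr rfl fun c hc => ?_
      rw [phi_eq, if_pos (Finset.mem_filter.mp hc).2]
    have hc₀val : phi S hgen f c₀ = phi S hgen f y - f y
        - ∑ c ∈ (children S hgen y).filter (fun c => (Desc S hgen c).Finite),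
            Phi S hgen f c := by
      rw [phi_eq, if_neg (by simpa using hcs_inf), if_neg hc₀ne]
      rw [hpar, if_pos rfl]
    have hinfpart : ∑ c ∈ (children S hgen y).filter (fun c => ¬ (Desc S hgen c).Finite),
        phi S hgen f c = phi S hgen f c₀ := by
      refine Finset.sum_eq_single_of_mem c₀
        (Finset.mem_filter.mpr ⟨hcs_mem, by simpa using hcs_inf⟩) ?_
      intro c hc hne
      obtain ⟨hcmem, hcinf⟩ := Finset.mem_filter.mp hc
      have hcpar : par S hgen c = y := ((mem_children S hgen).mp hcmem).2
      have hcne : c ≠ 1 := ((mem_children S hgen).mp hcmem).1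
      rw [phi_eq, if_neg hcinf, if_neg hcne, hcpar, if_neg (by rw [← hc₀]; exact hne)]
    rw [← hsplit, hfinpart, hinfpart, hc₀val]
    abel

noncomputable def psi (f : G → V) (s y : G) : V :=
  if (y * s ≠ 1 ∧ par S hgen (y * s) = y) then phi S hgen f (y * s) else 0

lemma sum_psi (f : G → V) (y : G) :
    ∑ s ∈ S, psi S hgen f s y = ∑ c ∈ children S hgen y, phi S hgen f c := by
  classical
  rw [children, Finset.sum_filter, Finset.sum_image (fun a _ b _ h => by
    exact mul_left_cancel h)]
  rfl

lemma sum_psi_inv (f : G → V) [Infinite G] (hsymm : ∀ s ∈ S, s⁻¹ ∈ S) (y : G) :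
    ∑ s ∈ S, psi S hgen f s⁻¹ (y * s) = phi S hgen f y := by
  classical
  have hterm : ∀ s : G, psi S hgen f s⁻¹ (y * s)
      = if (y ≠ 1 ∧ par S hgen y = y * s) then phi S hgen f y else 0 := by
    intro s
    rw [psi, mul_inv_cancel_right]
  by_cases hy : y = 1
  · subst hy
    rw [phi_one]
    refine Finset.sum_eq_zero fun s hs => ?_
    rw [hterm, if_neg (by simp)]
  · have hsel : (sel S hgen y)⁻¹ ∈ S := hsymm _ (sel_mem S hgen hy)
    have hkey : par S hgen y = y * (sel S hgen y)⁻¹ := rfl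
    rw [Finset.sum_eq_single_of_mem ((sel S hgen y)⁻¹) hsel ?other]
    · rw [hterm, if_pos ⟨hy, hkey⟩]
    case other =>
      intro s hs hne
      rw [hterm]
      refine if_neg fun hcon => hne ?_
      have : y * (sel S hgen y)⁻¹ = y * s := by rw [← hkey, hcon.2]
      exact (mul_left_cancel this).symm

include hgen in
theorem comb_key [Infinite G] (hsymm : ∀ s ∈ S, s⁻¹ ∈ S) (f : G → V) :
    ∃ H : G → G → V, ∀ y, f y = ∑ s ∈ S, (H s (y * s) - H s y) := by
  classical
  refine ⟨fun s y => psi S hgen f s⁻¹ y, fun y => ?_⟩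
  rw [Finset.sum_sub_distrib, sum_psi_inv S hgen f hsymm y]
  have hre : ∑ s ∈ S, psi S hgen f s⁻¹ y = ∑ s ∈ S, psi S hgen f s y := by
    refine Finset.sum_nbij' (fun s => s⁻¹) (fun s => s⁻¹) ?_ ?_ ?_ ?_ ?_ <;>
      intro s hs <;> simp [hsymm s hs]
  rw [hre, sum_psi S hgen f y, conservation S hgen f y]
  abel

end Walk

section Coind

variable (A : Type u) [CommRing A] (G : Type u) [Group G]
variable (M : Type u) [AddCommGroup M]

/-- Structure wrapper for the coinduced module `Hom(A[G], M)`, realized as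
functions `G → M`, to avoid instance clashes. -/
structure Coind (G M : Type u) : Type u where
  toFun : G → M

def coindEquiv : Coind G M ≃ (G → M) :=
  ⟨Coind.toFun, Coind.mk, fun _ => rfl, fun _ => rfl⟩

instance : AddCommGroup (Coind G M) := (coindEquiv G M).addCommGroup

lemma Coind.toFun_add (F F' : Coind G M) : (F + F').toFun = F.toFun + F'.toFun := rfl
lemma Coind.toFun_sub (F F' : Coind G M) : (F - F').toFun = F.toFun - F'.toFun := rfl
lemma Coind.toFun_zero : (0 : Coind G M).toFun = 0 := rfl

lemma Coind.ext' {F F' : Coind G M} (h : F.toFun = F'.toFun) : F = F' := by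
  cases F; cases F'; cases h; rfl

noncomputable def coindRho [Module A M] : G →* Module.End A (G → M) where
  toFun g := LinearMap.funLeft A M (fun y => y * g)
  map_one' := by ext F y; simp
  map_mul' g h := by ext F y; simp [Module.End.mul_apply, mul_assoc]

noncomputable def coindAlg [Module A M] :
    MonoidAlgebra A G →ₐ[A] Module.End A (G → M) :=
  MonoidAlgebra.lift A _ G (coindRho A G M)

lemma coindAlg_single [Module A M] (g : G) (a : A) (F : G → M) (y : G) :
    coindAlg A G M (MonoidAlgebra.single g a) F y = a • F (y * g) := by
  rw [coindAlg, MonoidAlgebra.lift_single]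
  rfl

noncomputable def coindModule [Module A M] : Module (MonoidAlgebra A G) (Coind G M) where
  smul r F := ⟨coindAlg A G M r F.toFun⟩
  one_smul F := by
    refine Coind.ext' G M ?_
    show coindAlg A G M 1 F.toFun = F.toFun
    rw [map_one]; rfl
  mul_smul r r' F := by
    refine Coind.ext' G M ?_
    show coindAlg A G M (r * r') F.toFun = coindAlg A G M r (coindAlg A G M r' F.toFun)
    rw [map_mul]; rfl
  smul_zero r := by
    refine Coind.ext' G M ?_
    show coindAlg A G M r (0 : Coind G M).toFun = (0 : Coind G M).toFun
    rw [Coind.toFun_zero]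
    exact map_zero (coindAlg A G M r)
  smul_add r F F' := by
    refine Coind.ext' G M ?_
    show coindAlg A G M r (F + F').toFun = coindAlg A G M r F.toFun + coindAlg A G M r F'.toFun
    rw [Coind.toFun_add]
    exact map_add (coindAlg A G M r) _ _
  add_smul r r' F := by
    refine Coind.ext' G M ?_
    show coindAlg A G M (r + r') F.toFun = _
    rw [map_add]; rfl
  zero_smul F := by
    refine Coind.ext' G M ?_
    show coindAlg A G M 0 F.toFun = (0 : Coind G M).toFun
    rw [map_zero]; rfl

end Coind

theorem mem_span_of_injective {A : Type u} [CommRing A] {G : Type u} [Group G] [Infinite G]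
    (S : Finset G) (hsymm : ∀ s ∈ S, s⁻¹ ∈ S) (hgen : ∀ x : G, ∃ n, x ∈ Wn S n)
    (M : Type u) [AddCommGroup M] [Module (MonoidAlgebra A G) M]
    (hInj : Module.Injective (MonoidAlgebra A G) M) (m : M) :
    m ∈ Submodule.span (MonoidAlgebra A G)
      {x : M | ∃ (g : G) (v : M), x = (MonoidAlgebra.of A G g) • v - v} := by
  classical
  letI instA : Module A M := Module.compHom M (algebraMap A (MonoidAlgebra A G))
  letI instC : Module (MonoidAlgebra A G) (Coind G M) := coindModule A G M
  have smul_def : ∀ (r : MonoidAlgebra A G) (F : Coind G M),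
      (r • F).toFun = coindAlg A G M r F.toFun := fun r F => rfl
  have sum_toFun : ∀ (T : Finset G) (F : G → Coind G M),
      (∑ i ∈ T, F i).toFun = ∑ i ∈ T, (F i).toFun := by
    intro T F
    induction T using Finset.cons_induction with
    | empty => rfl
    | cons a T ha ih =>
        rw [Finset.sum_cons, Finset.sum_cons, Coind.toFun_add, ih]
  have haM : ∀ (a : A) (v : M),
      a • v = (MonoidAlgebra.single 1 a : MonoidAlgebra A G) • v := by
    intro a v
    show (algebraMap A (MonoidAlgebra A G) a) • v = _
    rw [MonoidAlgebra.coe_algebraMap]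
    simp
  have hsingle_smul : ∀ (g : G) (a : A) (F : Coind G M) (y : G),
      ((MonoidAlgebra.single g a : MonoidAlgebra A G) • F).toFun y = a • F.toFun (y * g) := by
    intro g a F y; rw [smul_def]; exact coindAlg_single A G M g a F.toFun y
  have hcomm : ∀ (g : G) (a : A) (v : M),
      Coind.mk (fun y => (MonoidAlgebra.single y 1 : MonoidAlgebra A G)
          • ((MonoidAlgebra.single g a : MonoidAlgebra A G) • v))
        = (MonoidAlgebra.single g a : MonoidAlgebra A G)
            • Coind.mk (fun y => (MonoidAlgebra.single y 1 : MonoidAlgebra A G) • v) := by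
    intro g a v
    refine Coind.ext' G M ?_
    funext y
    rw [hsingle_smul g a _ y]
    show (MonoidAlgebra.single y 1 : MonoidAlgebra A G)
        • ((MonoidAlgebra.single g a : MonoidAlgebra A G) • v)
      = a • ((MonoidAlgebra.single (y * g) 1 : MonoidAlgebra A G) • v)
    rw [haM, ← mul_smul, ← mul_smul, MonoidAlgebra.single_mul_single,
      MonoidAlgebra.single_mul_single]
    simp
  obtain ⟨ι, hι⟩ : ∃ ι : M →ₗ[MonoidAlgebra A G] (Coind G M),
      ∀ v y, (ι v).toFun y = (MonoidAlgebra.single y 1 : MonoidAlgebra A G) • v := by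
    refine ⟨⟨⟨fun v => Coind.mk (fun y => (MonoidAlgebra.single y 1 : MonoidAlgebra A G) • v),
      ?_⟩, ?_⟩, fun v y => rfl⟩
    · intro v w
      refine Coind.ext' G M ?_
      rw [Coind.toFun_add]
      funext y
      show (MonoidAlgebra.single y 1 : MonoidAlgebra A G) • (v + w) = _
      rw [smul_add]; rfl
    · intro r v
      simp only [RingHom.id_apply]
      induction r using MonoidAlgebra.induction_on with
      | of g => simpa [MonoidAlgebra.of_apply] using hcomm g 1 v
      | add r r' ih ih' =>
          have h1 : Coind.mk (fun y => (MonoidAlgebra.single y (1:A) : MonoidAlgebra A G)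
                • ((r + r') • v))
              = Coind.mk (fun y => (MonoidAlgebra.single y (1:A) : MonoidAlgebra A G) • (r • v))
                + Coind.mk (fun y => (MonoidAlgebra.single y (1:A) : MonoidAlgebra A G) • (r' • v)) := by
            refine Coind.ext' G M ?_
            rw [Coind.toFun_add]
            funext y
            show (MonoidAlgebra.single y (1:A) : MonoidAlgebra A G) • ((r + r') • v) = _
            rw [add_smul, smul_add]; rfl
          rw [h1, ih, ih', ← add_smul]
      | smul a r ih =>
          have h1 : (a • r) = (MonoidAlgebra.single 1 a : MonoidAlgebra A G) * r := by
            rw [Algebra.smul_def, MonoidAlgebra.coe_algebraMap]; simp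
          have h2 : (a • r) • v
              = (MonoidAlgebra.single 1 a : MonoidAlgebra A G) • (r • v) := by
            rw [h1, mul_smul]
          rw [h2, hcomm 1 a (r • v), ih, ← mul_smul, ← h1]
  have hι_inj : Function.Injective ι := by
    intro v w h
    have h1 : (ι v).toFun 1 = (ι w).toFun 1 := by rw [h]
    rw [hι, hι, ← MonoidAlgebra.one_def, one_smul, one_smul] at h1
    exact h1
  obtain ⟨π, hπ⟩ := hInj.out ι hι_inj LinearMap.id
  obtain ⟨H, hH⟩ := comb_key S hgen hsymm
    (fun y => (MonoidAlgebra.single y 1 : MonoidAlgebra A G) • m)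
  let HC : G → Coind G M := fun s => Coind.mk (H s)
  have hιm : ι m = ∑ s ∈ S, ((MonoidAlgebra.of A G s) • HC s - HC s) := by
    refine Coind.ext' G M ?_
    funext y
    rw [sum_toFun]
    have hterm : ∀ s ∈ S,
        ((MonoidAlgebra.of A G s) • HC s - HC s).toFun y = H s (y * s) - H s y := by
      intro s hs
      rw [Coind.toFun_sub, Pi.sub_apply]
      congr 1
      rw [MonoidAlgebra.of_apply, hsingle_smul s 1 (HC s) y, one_smul]
    rw [Finset.sum_apply, Finset.sum_congr rfl hterm, hι]
    exact hH y
  have hm : m = π (ι m) := (hπ m).symm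
  rw [hm, hιm, map_sum]
  refine Submodule.sum_mem _ fun s hs => ?_
  rw [π.map_sub, π.map_smul]
  exact Submodule.subset_span ⟨s, π (HC s), rfl⟩

theorem exists_symm_gen (G : Type u) [Group G] (hfg : Group.FG G) :
    ∃ S : Finset G, (∀ s ∈ S, s⁻¹ ∈ S) ∧ ∀ x : G, ∃ n, x ∈ Wn S n := by
  classical
  obtain ⟨Sset, hclos, hfin⟩ := Group.fg_iff.mp hfg
  set T : Finset G := hfin.toFinset with hT
  refine ⟨T ∪ T.image (·⁻¹), ?_, ?_⟩
  · intro s hs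
    rcases Finset.mem_union.mp hs with h | h
    · exact Finset.mem_union_right _ (Finset.mem_image.mpr ⟨s, h, rfl⟩)
    · obtain ⟨t, ht, rfl⟩ := Finset.mem_image.mp h
      rw [inv_inv]
      exact Finset.mem_union_left _ ht
  · set S : Finset G := T ∪ T.image (·⁻¹) with hS
    have hsymm : ∀ s ∈ S, s⁻¹ ∈ S := by
      intro s hs
      rcases Finset.mem_union.mp hs with h | h
      · exact Finset.mem_union_right _ (Finset.mem_image.mpr ⟨s, h, rfl⟩)
      · obtain ⟨t, ht, rfl⟩ := Finset.mem_image.mp h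
        rw [inv_inv]
        exact Finset.mem_union_left _ ht
    let K : Subgroup G :=
      { carrier := {x : G | ∃ n, x ∈ Wn S n}
        one_mem' := ⟨0, one_mem_Wn S⟩
        mul_mem' := by
          rintro a b ⟨na, ha⟩ ⟨nb, hb⟩
          exact ⟨na + nb, mul_mem_Wn ha hb⟩
        inv_mem' := by
          rintro a ⟨n, h⟩
          exact ⟨n, inv_mem_Wn hsymm h⟩ }
    have hle : Subgroup.closure Sset ≤ K := by
      rw [Subgroup.closure_le]
      intro x hx
      have hxT : x ∈ T := hfin.mem_toFinset.mpr hx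
      have hxS : x ∈ S := Finset.mem_union_left _ hxT
      exact ⟨1, ⟨1, one_mem_Wn S, x, hxS, (one_mul x).symm⟩⟩
    intro x
    rw [hclos] at hle
    exact hle (Subgroup.mem_top x)

end GPAux

/-- the coinvariants of any injective module over the group
algebra of an infinite finitely generated group vanish. -/
theorem stmt14 (A : Type u) [CommRing A] (G : Type u) [Group G] [Infinite G]
    (hfg : Group.FG G) (I : ModuleCat.{u} (MonoidAlgebra A G))
    (hI : Module.Injective (MonoidAlgebra A G) I) :
    Subsingleton (Coinv A G I) := by
  classical
  obtain ⟨S, hsymm, hgen⟩ := GPAux.exists_symm_gen G hfg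
  have htop : coinvRel A G I = ⊤ := by
    rw [eq_top_iff]
    intro m _
    rw [coinvRel]
    exact GPAux.mem_span_of_injective S hsymm hgen ↑I hI m
  exact Submodule.Quotient.subsingleton_iff.mpr htop

end GP
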